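/- arXiv:2511.02963 — 4 statements merged into one kernel-verified Lean document; each statement's English description precedes it below -/
import Mathlib

section
/- Let S be a finite set with |S| = k ≥ 3 and let 𝒞 = {V₁,…,V_ℓ} be a pair-cover of S (i.e., a family of distinct subsets of S, each of size at least 2, such that every 2-element subset of S is contained in some V_i). Define α(𝒞) = (ℓ − 1)·(k−2)/(C(k,2)−1) + Σ_{i=1}^{ℓ} (|V_i| − 2). If 𝒞 is non-trivial (i.e., 𝒞 ≠ {S}), then α(𝒞) ≥ k − 2. -/
open Finset

/-- A pair-cover of `S`: a family of subsets of `S`, each of size at least 2,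
such that every pair of distinct elements of `S` lies in some member. -/
def IsPairCover {V : Type*} (S : Finset V) (C : Finset (Finset V)) : Prop :=
  (∀ W ∈ C, W ⊆ S ∧ 2 ≤ W.card) ∧
    ∀ x ∈ S, ∀ y ∈ S, x ≠ y → ∃ W ∈ C, x ∈ W ∧ y ∈ W

/-- `α(𝒞) = (|𝒞|−1)/m₂(K_k) + Σ_{W∈𝒞}(|W|−2)`, where `m₂(K_k) = (C(k,2)−1)/(k−2)`. -/
def alphaPC {V : Type*} (k : ℕ) (C : Finset (Finset V)) : ℚ :=
  ((C.card : ℚ) - 1) * (((k : ℚ) - 2) / ((k.choose 2 : ℚ) - 1)) +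
    ∑ W ∈ C, ((W.card : ℚ) - 2)

/-- if 𝒞 is a non-trivial pair-cover of a k-set S (k ≥ 3),
then α(𝒞) ≥ k − 2. -/
theorem alpha_nontrivial_paircover_lower_bound {V : Type*} [DecidableEq V]
    (k : ℕ) (hk : 3 ≤ k) (S : Finset V) (hS : S.card = k)
    (C : Finset (Finset V)) (hC : IsPairCover S C) (hnt : C ≠ {S}) :
    (k : ℚ) - 2 ≤ alphaPC k C := by
  obtain ⟨hmem, hcov⟩ := hC
  -- covering inequality in ℕ
  have hsub : S.powersetCard 2 ⊆ C.biUnion fun W => W.powersetCard 2 := by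
    intro P hP
    rw [mem_powersetCard] at hP
    obtain ⟨hPS, hP2⟩ := hP
    obtain ⟨x, y, hxy, rfl⟩ := Finset.card_eq_two.mp hP2
    have hx : x ∈ S := hPS (by simp)
    have hy : y ∈ S := hPS (by simp)
    obtain ⟨W, hW, hxW, hyW⟩ := hcov x hx y hy hxy
    refine mem_biUnion.mpr ⟨W, hW, mem_powersetCard.mpr ⟨?_, hP2⟩⟩
    intro z hz
    rcases Finset.mem_insert.mp hz with rfl | hz
    · exact hxW
    · rw [Finset.mem_singleton] at hz; subst hz; exact hyW
  have hcount : k.choose 2 ≤ ∑ W ∈ C, W.card.choose 2 := by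
    calc k.choose 2 = (S.powersetCard 2).card := by rw [card_powersetCard, hS]
      _ ≤ (C.biUnion fun W => W.powersetCard 2).card := Finset.card_le_card hsub
      _ ≤ ∑ W ∈ C, (W.powersetCard 2).card := card_biUnion_le
      _ = ∑ W ∈ C, W.card.choose 2 := by simp [card_powersetCard]
  have hcountQ : ((k.choose 2 : ℕ) : ℚ) ≤ ∑ W ∈ C, ((W.card.choose 2 : ℕ) : ℚ) := by
    rw [← Nat.cast_sum]
    exact_mod_cast hcount
  have hkQ : (3 : ℚ) ≤ (k : ℚ) := by exact_mod_cast hk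
  have hKk : (k.choose 2 : ℚ) = (k : ℚ) * ((k : ℚ) - 1) / 2 := by
    rw [Nat.cast_choose_two]
  have hK3 : (3 : ℚ) ≤ (k.choose 2 : ℚ) := by
    have : (3:ℕ).choose 2 ≤ k.choose 2 := Nat.choose_le_choose 2 hk
    exact_mod_cast this
  have hd : (0 : ℚ) < (k : ℚ) - 2 := by linarith
  have he : (0 : ℚ) < (k.choose 2 : ℚ) - 1 := by linarith
  -- per-set convexity bound
  have hper : ∀ W ∈ C, ((W.card.choose 2 : ℚ) - 1) * ((k : ℚ) - 2) ≤
      ((W.card : ℚ) - 2) * ((k.choose 2 : ℚ) - 1) := by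
    intro W hW
    obtain ⟨hWS, hW2⟩ := hmem W hW
    have hak : (W.card : ℚ) ≤ (k : ℚ) := by
      exact_mod_cast hS ▸ Finset.card_le_card hWS
    have ha2 : (2 : ℚ) ≤ (W.card : ℚ) := by exact_mod_cast hW2
    rw [Nat.cast_choose_two, hKk]
    nlinarith [mul_nonneg (mul_nonneg (sub_nonneg.mpr ha2) (sub_nonneg.mpr hak))
      (le_of_lt hd)]
  have hsum : (∑ W ∈ C, ((W.card.choose 2 : ℚ)) - (C.card : ℚ)) * ((k : ℚ) - 2) ≤
      (∑ W ∈ C, ((W.card : ℚ) - 2)) * ((k.choose 2 : ℚ) - 1) := by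
    have := Finset.sum_le_sum hper
    rw [← Finset.sum_mul, ← Finset.sum_mul, Finset.sum_sub_distrib] at *
    simpa using this
  set T : ℚ := ∑ W ∈ C, ((W.card : ℚ) - 2) with hT
  have hkey : ((k.choose 2 : ℚ) - (C.card : ℚ)) * ((k : ℚ) - 2) ≤
      T * ((k.choose 2 : ℚ) - 1) := by
    nlinarith [hsum, hcountQ]
  rw [alphaPC, ← hT]
  have hne : ((k.choose 2 : ℚ) - 1) ≠ 0 := ne_of_gt he
  rw [← sub_nonneg]
  have hexp : ((C.card : ℚ) - 1) * (((k : ℚ) - 2) / ((k.choose 2 : ℚ) - 1)) + T -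
      ((k : ℚ) - 2) =
      (((C.card : ℚ) - 1) * ((k : ℚ) - 2) + T * ((k.choose 2 : ℚ) - 1) -
        ((k : ℚ) - 2) * ((k.choose 2 : ℚ) - 1)) / ((k.choose 2 : ℚ) - 1) := by
    field_simp
  rw [hexp]
  apply div_nonneg _ (le_of_lt he)
  nlinarith [hkey]
end

section
/- Let S be a finite set with |S| = k ≥ 3 and let 𝒞 be a pair-cover of S. If V ∈ 𝒞 with |V| ≥ 3, and 𝒞' = (𝒞 \ {V}) ∪ {all 2-element subsets of V}, then 𝒞' is again a pair-cover of S and α(𝒞') ≤ α(𝒞), where α(𝒟) = (|𝒟| − 1)/m₂(K_k) + Σ_{W ∈ 𝒟}(|W| − 2) and m₂(K_k) = (C(k,2)−1)/(k−2). -/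
open Finset

/-- replacing a member V of a pair-cover (|V| ≥ 3) by all its
2-element subsets again gives a pair-cover, and does not increase α. -/
theorem alpha_split_step {V : Type*} [DecidableEq V]
    (k : ℕ) (hk : 3 ≤ k) (S : Finset V) (hS : S.card = k)
    (C : Finset (Finset V)) (hC : IsPairCover S C)
    (W : Finset V) (hW : W ∈ C) (hW3 : 3 ≤ W.card) :
    IsPairCover S ((C.erase W) ∪ Finset.powersetCard 2 W) ∧
      alphaPC k ((C.erase W) ∪ Finset.powersetCard 2 W) ≤ alphaPC k C := by
  obtain ⟨hmem, hcov⟩ := hC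
  have hWS : W ⊆ S := (hmem W hW).1
  set C' := (C.erase W) ∪ Finset.powersetCard 2 W with hC'def
  have hpc : IsPairCover S C' := by
    constructor
    · intro X hX
      rcases Finset.mem_union.1 hX with h | h
      · exact hmem X (Finset.mem_of_mem_erase h)
      · rw [Finset.mem_powersetCard] at h
        exact ⟨h.1.trans hWS, h.2.ge⟩
    · intro x hx y hy hxy
      obtain ⟨U, hU, hxU, hyU⟩ := hcov x hx y hy hxy
      by_cases hUW : U = W
      · refine ⟨{x, y}, Finset.mem_union_right _ ?_, by simp, by simp⟩
        rw [Finset.mem_powersetCard]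
        refine ⟨?_, ?_⟩
        · intro z hz
          rcases Finset.mem_insert.1 hz with rfl | hz
          · exact hUW ▸ hxU
          · rw [Finset.mem_singleton] at hz; subst hz; exact hUW ▸ hyU
        · rw [Finset.card_insert_of_notMem (by simp [hxy]), Finset.card_singleton]
      · exact ⟨U, Finset.mem_union_left _ (Finset.mem_erase.2 ⟨hUW, hU⟩), hxU, hyU⟩
  refine ⟨hpc, ?_⟩
  set n := W.card with hn
  have hnk : n ≤ k := hS ▸ Finset.card_le_card hWS
  have hn3 : (3 : ℚ) ≤ (n : ℚ) := by exact_mod_cast hW3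
  have hnk' : (n : ℚ) ≤ (k : ℚ) := by exact_mod_cast hnk
  have hk3 : (3 : ℚ) ≤ (k : ℚ) := by exact_mod_cast hk
  -- sum equality
  have hsum1 : ∑ X ∈ C.erase W, ((X.card : ℚ) - 2) = ∑ X ∈ C', ((X.card : ℚ) - 2) := by
    refine Finset.sum_subset Finset.subset_union_left ?_
    intro X hX hX'
    have : X ∈ Finset.powersetCard 2 W := by
      rcases Finset.mem_union.1 hX with h | h
      · exact absurd h hX'
      · exact h
    rw [(Finset.mem_powersetCard.1 this).2]
    norm_num
  have hsum2 : ∑ X ∈ C.erase W, ((X.card : ℚ) - 2) + ((W.card : ℚ) - 2)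
      = ∑ X ∈ C, ((X.card : ℚ) - 2) := Finset.sum_erase_add C _ hW
  -- cardinality bound
  have hCpos : 1 ≤ C.card := Finset.card_pos.2 ⟨W, hW⟩
  have hcard : (C'.card : ℚ) ≤ (C.card : ℚ) - 1 + (n.choose 2 : ℚ) := by
    have h1 : C'.card ≤ (C.erase W).card + (Finset.powersetCard 2 W).card :=
      Finset.card_union_le _ _
    have h2 : (C.erase W).card = C.card - 1 := Finset.card_erase_of_mem hW
    have h3 : (Finset.powersetCard 2 W).card = n.choose 2 := by
      rw [Finset.card_powersetCard]
    have : C'.card ≤ C.card - 1 + n.choose 2 := by rw [← h2, ← h3]; exact h1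
    have hcast : ((C.card - 1 + n.choose 2 : ℕ) : ℚ) = (C.card : ℚ) - 1 + (n.choose 2 : ℚ) := by
      push_cast [Nat.cast_sub hCpos]
      ring
    calc (C'.card : ℚ) ≤ ((C.card - 1 + n.choose 2 : ℕ) : ℚ) := by exact_mod_cast this
      _ = _ := hcast
  -- positivity of denominator
  have hD : (0 : ℚ) < (k.choose 2 : ℚ) - 1 := by
    rw [Nat.cast_choose_two]
    nlinarith
  -- key inequality
  have hkey : ((n.choose 2 : ℚ) - 1) * ((k : ℚ) - 2) ≤ ((n : ℚ) - 2) * ((k.choose 2 : ℚ) - 1) := by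
    rw [Nat.cast_choose_two, Nat.cast_choose_two]
    nlinarith [mul_nonneg (mul_nonneg (by linarith : (0:ℚ) ≤ (n:ℚ) - 2)
      (by linarith : (0:ℚ) ≤ (k:ℚ) - 2)) (by linarith : (0:ℚ) ≤ (k:ℚ) - (n:ℚ))]
  -- finish
  unfold alphaPC
  set r : ℚ := ((k : ℚ) - 2) / ((k.choose 2 : ℚ) - 1) with hr
  have hr0 : 0 ≤ r := div_nonneg (by linarith) hD.le
  have hstep1 : ((C'.card : ℚ) - 1) * r ≤ ((C.card : ℚ) - 1 + ((n.choose 2 : ℚ) - 1)) * r :=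
    mul_le_mul_of_nonneg_right (by linarith) hr0
  have hstep2 : ((n.choose 2 : ℚ) - 1) * r ≤ (n : ℚ) - 2 := by
    rw [hr, mul_div_assoc', div_le_iff₀ hD]
    calc ((n.choose 2 : ℚ) - 1) * ((k : ℚ) - 2) ≤ ((n : ℚ) - 2) * ((k.choose 2 : ℚ) - 1) := hkey
      _ = _ := by ring
  have hsum : ∑ X ∈ C', ((X.card : ℚ) - 2) = ∑ X ∈ C, ((X.card : ℚ) - 2) - ((n : ℚ) - 2) := by
    have hWn : ((W.card : ℚ)) = (n : ℚ) := rfl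
    rw [← hsum1]
    rw [hWn] at hsum2
    linarith [hsum2]
  rw [hsum]
  nlinarith [hstep1, hstep2, hr0]
end

section
/- Let 𝒽 be an s-uniform hypergraph on vertex set V that is linear (any two distinct hyperedges share at most one vertex) and k-conformal (every k-vertex clique of the primal graph G[𝒽] is contained in some hyperedge), where s = R(k) − 1 and k ≥ 3. Then G[𝒽] ↛ K_k, i.e., there exists a red-blue colouring of the edges of G[𝒽] with no monochromatic copy of K_k. -/
open Finset

/-- The primal graph of a hypergraph: two vertices are adjacent iff they lie
together in some hyperedge. -/
def primalGraph {V : Type*} (H : Finset (Finset V)) : SimpleGraph V where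
  Adj x y := x ≠ y ∧ ∃ E ∈ H, x ∈ E ∧ y ∈ E
  symm := by
    constructor
    rintro x y ⟨hxy, E, hE, hx, hy⟩
    exact ⟨hxy.symm, E, hE, hy, hx⟩
  loopless := by
    constructor
    rintro x ⟨hxx, -⟩
    exact hxx rfl

/-- `arrowPair G s t` : every red-blue colouring of the edges of `G` (encoded by the
red subgraph `R ≤ G`, the blue graph being `G \ R`) yields a red `K_s` or a blue `K_t`. -/
def arrowPair {V : Type*} (G : SimpleGraph V) (s t : ℕ) : Prop :=
  ∀ R : SimpleGraph V, R ≤ G →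
    (∃ A : Finset V, R.IsNClique s A) ∨ (∃ B : Finset V, (G \ R).IsNClique t B)

/-- The off-diagonal Ramsey number `R(s,t)`. -/
noncomputable def ramseyNumber2 (s t : ℕ) : ℕ :=
  sInf {n : ℕ | arrowPair (⊤ : SimpleGraph (Fin n)) s t}

/-- The diagonal Ramsey number `R(k)`. -/
noncomputable def ramseyNumber (k : ℕ) : ℕ := ramseyNumber2 k k

/-- if 𝒽 is a linear, k-conformal, s-uniform hypergraph with
s = R(k) − 1 and k ≥ 3, then G[𝒽] ↛ K_k: there is a red-blue colouring of its
edges (a red subgraph R, the blue edges being the rest) with no monochromatic K_k. -/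
theorem primal_not_ramsey_of_linear_conformal {V : Type*} [DecidableEq V]
    (k s : ℕ) (hk : 3 ≤ k) (hs : s = ramseyNumber k - 1)
    (H : Finset (Finset V)) (hunif : ∀ E ∈ H, E.card = s)
    (hlin : ∀ E ∈ H, ∀ F ∈ H, E ≠ F → (E ∩ F).card ≤ 1)
    (hconf : ∀ S : Finset V, S.card = k →
      (primalGraph H).IsClique (S : Set V) → ∃ E ∈ H, S ⊆ E) :
    ∃ R : SimpleGraph V, R ≤ primalGraph H ∧
      (∀ A : Finset V, ¬ R.IsNClique k A) ∧
      (∀ A : Finset V, ¬ (primalGraph H \ R).IsNClique k A) := by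
  classical
  -- Step 1: a good colouring on `Fin s`
  have hnot : ¬ arrowPair (⊤ : SimpleGraph (Fin s)) k k := by
    intro harr
    have hle : ramseyNumber k ≤ s := Nat.sInf_le harr
    have hs0 : s = 0 := by omega
    subst hs0
    rcases harr ⊥ bot_le with ⟨A, hA⟩ | ⟨A, hA⟩ <;>
    · have h1 : A.card ≤ 0 := by simpa using Finset.card_le_univ A
      have h2 := hA.2
      omega
  rw [arrowPair] at hnot
  push_neg at hnot
  obtain ⟨R₀, -, hred, hblue⟩ := hnot
  -- uniqueness of the hyperedge containing two distinct vertices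
  have huniq : ∀ E ∈ H, ∀ E' ∈ H, ∀ x y : V, x ≠ y → x ∈ E → y ∈ E →
      x ∈ E' → y ∈ E' → E = E' := by
    intro E hE E' hE' x y hxy hx hy hx' hy'
    by_contra hne
    have hcard := hlin E hE E' hE' hne
    have hsub : ({x, y} : Finset V) ⊆ E ∩ E' := by
      intro z hz
      simp only [Finset.mem_insert, Finset.mem_singleton] at hz
      rcases hz with rfl | rfl <;> simp [Finset.mem_inter, *]
    have h2 : ({x, y} : Finset V).card = 2 := Finset.card_pair hxy
    have := Finset.card_le_card hsub
    omega
  set e : ∀ E, E ∈ H → (↥E ≃ Fin s) :=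
    fun E hE => E.equivFinOfCardEq (hunif E hE) with he
  have Rsymm : Symmetric (fun x y : V => ∃ E, ∃ hE : E ∈ H, ∃ hx : x ∈ E, ∃ hy : y ∈ E,
      R₀.Adj (e E hE ⟨x, hx⟩) (e E hE ⟨y, hy⟩)) := by
    rintro x y ⟨E, hE, hx, hy, h⟩
    exact ⟨E, hE, hy, hx, h.symm⟩
  have Rloopless : Irreflexive (fun x y : V => ∃ E, ∃ hE : E ∈ H, ∃ hx : x ∈ E, ∃ hy : y ∈ E,
      R₀.Adj (e E hE ⟨x, hx⟩) (e E hE ⟨y, hy⟩)) := by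
    rintro x ⟨E, hE, hx, hy, h⟩
    exact R₀.loopless.irrefl _ h
  refine ⟨SimpleGraph.mk _ (Std.Symm.mk @Rsymm) (Std.Irrefl.mk Rloopless), ?_, ?_, ?_⟩
  · rintro x y ⟨E, hE, hx, hy, h⟩
    refine ⟨?_, E, hE, hx, hy⟩
    rintro rfl
    exact R₀.loopless.irrefl _ h
  · -- no red K_k
    intro A hA
    have hprimal : (primalGraph H).IsClique (A : Set V) := by
      refine hA.1.mono ?_
      rintro x y ⟨E, hE, hx, hy, h⟩
      refine ⟨?_, E, hE, hx, hy⟩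
      rintro rfl
      exact R₀.loopless.irrefl _ h
    obtain ⟨E, hE, hAE⟩ := hconf A hA.2 hprimal
    obtain ⟨a, ha⟩ : A.Nonempty := by
      rw [← Finset.card_pos, hA.2]; omega
    set g : V → Fin s := fun x =>
      if h : x ∈ E then e E hE ⟨x, h⟩ else e E hE ⟨a, hAE ha⟩ with hg
    have hgval : ∀ x, ∀ hx : x ∈ E, g x = e E hE ⟨x, hx⟩ := by
      intro x hx; simp [hg, hx]
    have hinj : Set.InjOn g (A : Set V) := by
      intro x hx y hy hxy
      rw [hgval x (hAE hx), hgval y (hAE hy)] at hxy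
      have := (e E hE).injective hxy
      exact congrArg Subtype.val this
    refine hred (A.image g) ⟨?_, ?_⟩
    · intro u hu v hv huv
      simp only [Finset.coe_image, Set.mem_image, Finset.mem_coe] at hu hv
      obtain ⟨x, hx, rfl⟩ := hu
      obtain ⟨y, hy, rfl⟩ := hv
      have hxy : x ≠ y := fun hxy => huv (by rw [hxy])
      obtain ⟨E', hE', hx', hy', h⟩ := hA.1 hx hy hxy
      have hEE : E = E' := huniq E hE E' hE' x y hxy (hAE hx) (hAE hy) hx' hy'
      subst hEE
      rw [hgval x hx', hgval y hy']
      exact h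
    · rw [Finset.card_image_of_injOn hinj, hA.2]
  · -- no blue K_k
    intro A hA
    have hprimal : (primalGraph H).IsClique (A : Set V) := hA.1.mono sdiff_le
    obtain ⟨E, hE, hAE⟩ := hconf A hA.2 hprimal
    obtain ⟨a, ha⟩ : A.Nonempty := by
      rw [← Finset.card_pos, hA.2]; omega
    set g : V → Fin s := fun x =>
      if h : x ∈ E then e E hE ⟨x, h⟩ else e E hE ⟨a, hAE ha⟩ with hg
    have hgval : ∀ x, ∀ hx : x ∈ E, g x = e E hE ⟨x, hx⟩ := by
      intro x hx; simp [hg, hx]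
    have hinj : Set.InjOn g (A : Set V) := by
      intro x hx y hy hxy
      rw [hgval x (hAE hx), hgval y (hAE hy)] at hxy
      have := (e E hE).injective hxy
      exact congrArg Subtype.val this
    refine hblue (A.image g) ⟨?_, ?_⟩
    · intro u hu v hv huv
      simp only [Finset.coe_image, Set.mem_image, Finset.mem_coe] at hu hv
      obtain ⟨x, hx, rfl⟩ := hu
      obtain ⟨y, hy, rfl⟩ := hv
      have hxy : x ≠ y := fun hxy => huv (by rw [hxy])
      obtain ⟨-, hnotR⟩ := hA.1 hx hy hxy
      rw [hgval x (hAE hx), hgval y (hAE hy)]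
      refine ⟨by simpa using hxy, ?_⟩
      intro hadj
      rw [hgval x (hAE hx), hgval y (hAE hy)] at huv
      exact hnotR ⟨E, hE, hAE hx, hAE hy, hadj⟩
    · rw [Finset.card_image_of_injOn hinj, hA.2]
end

section
/- Let k ≥ 3, s = R(k)−1, and let 𝒽 be an s-uniform linear hypergraph on vertex set V such that for every k-subset S of V spanning a clique in the primal graph G[𝒽], S is contained in a hyperedge of 𝒽 (k-conformality). For each hyperedge E fix a 2-colouring c_E of the pairs in E with no monochromatic K_k (possible since |E| = R(k)−1). Then the edge-colouring c of G[𝒽] defined by c(xy) = c_E(xy) for the unique hyperedge E containing {x,y} is well-defined and has no monochromatic K_k. -/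
open Finset

/-- A colouring c is monochromatic on a vertex set A if all pairs of distinct
vertices of A receive the same colour. -/
def MonoOn {V : Type*} (c : Sym2 V → Bool) (A : Finset V) : Prop :=
  ∃ b : Bool, ∀ x ∈ A, ∀ y ∈ A, x ≠ y → c s(x, y) = b

/-- for a linear k-conformal s-uniform hypergraph (s = R(k)−1),
gluing colourings c_E of the hyperedges, each with no monochromatic K_k, gives a
well-defined colouring of the primal graph with no monochromatic K_k. -/
theorem glued_colouring_no_mono_clique {V : Type*} [DecidableEq V]
    (k s : ℕ) (hk : 3 ≤ k) (hs : s = ramseyNumber k - 1)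
    (H : Finset (Finset V)) (hunif : ∀ E ∈ H, E.card = s)
    (hlin : ∀ E ∈ H, ∀ F ∈ H, E ≠ F → (E ∩ F).card ≤ 1)
    (hconf : ∀ S : Finset V, S.card = k →
      (primalGraph H).IsClique (S : Set V) → ∃ E ∈ H, S ⊆ E)
    (cE : Finset V → Sym2 V → Bool)
    (hcE : ∀ E ∈ H, ∀ A : Finset V, A ⊆ E → A.card = k → ¬ MonoOn (cE E) A) :
    ∃ c : Sym2 V → Bool,
      (∀ E ∈ H, ∀ x ∈ E, ∀ y ∈ E, x ≠ y → c s(x, y) = cE E s(x, y)) ∧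
      ∀ A : Finset V, (primalGraph H).IsNClique k A → ¬ MonoOn c A := by
  classical
  -- uniqueness of hyperedge containing two distinct vertices
  have huniq : ∀ E ∈ H, ∀ F ∈ H, ∀ x y : V, x ≠ y → x ∈ E → y ∈ E → x ∈ F → y ∈ F → E = F := by
    intro E hE F hF x y hxy hxE hyE hxF hyF
    by_contra hne
    have h2 : ({x, y} : Finset V) ⊆ E ∩ F := by
      intro v hv
      simp only [Finset.mem_insert, Finset.mem_singleton] at hv
      rcases hv with rfl | rfl <;> simp [Finset.mem_inter, *]
    have hcard : ({x, y} : Finset V).card = 2 := Finset.card_pair hxy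
    have := Finset.card_le_card h2
    have := hlin E hE F hF hne
    omega
  set P : Sym2 V → Prop := fun e => ∃ E, E ∈ H ∧ ∀ v ∈ e, v ∈ E with hP
  refine ⟨fun e => if h : P e then cE h.choose e else false, ?_, ?_⟩
  · intro E hE x hx y hy hxy
    have hPe : P s(x, y) := ⟨E, hE, by
      intro v hv
      rw [Sym2.mem_iff] at hv
      rcases hv with rfl | rfl <;> assumption⟩
    simp only [dif_pos hPe]
    have hc := hPe.choose_spec
    have hEq : hPe.choose = E := by
      refine huniq _ hc.1 E hE x y hxy ?_ ?_ hx hy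
      · exact hc.2 x (by simp)
      · exact hc.2 y (by simp)
    rw [hEq]
  · rintro A ⟨hclique, hcard⟩ ⟨b, hb⟩
    obtain ⟨E, hE, hAE⟩ := hconf A hcard hclique
    refine hcE E hE A hAE hcard ⟨b, ?_⟩
    intro x hx y hy hxy
    have hPe : P s(x, y) := ⟨E, hE, by
      intro v hv
      rw [Sym2.mem_iff] at hv
      rcases hv with rfl | rfl
      · exact hAE hx
      · exact hAE hy⟩
    have := hb x hx y hy hxy
    simp only [dif_pos hPe] at this
    have hc := hPe.choose_spec
    have hEq : hPe.choose = E := by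
      refine huniq _ hc.1 E hE x y hxy ?_ ?_ (hAE hx) (hAE hy)
      · exact hc.2 x (by simp)
      · exact hc.2 y (by simp)
    rw [hEq] at this
    exact this
end
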